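/- Let O be the ℂ-subalgebra of ℂ[[t]] that is the image of the substitution homomorphism ℂ[[x,y]] → ℂ[[t]] determined by x ↦ t⁴ and y ↦ t⁶ + t⁷. Then {ord(f) : f ∈ O, f ≠ 0} = ℕ ∖ {1, 2, 3, 5, 7, 9, 11, 15}; in particular 13 is the order of an element of O while 15 is not. -/

import Mathlib

set_option maxHeartbeats 1000000

/-- The order of a formal power series: the smallest `i` such that the coefficient
of `t^i` is nonzero (junk value `0` for the zero series). -/
noncomputable def ord (f : PowerSeries ℂ) : ℕ :=
  sInf {i : ℕ | PowerSeries.coeff i f ≠ 0}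

/-- The substitution homomorphism `ℂ[[x,y]] → ℂ[[t]]`, `x ↦ t⁴`, `y ↦ t⁶ + t⁷`,
described coefficientwise: the coefficient of `t^n` in the image of `P` is the (finite)
sum over monomials `x^a y^b` of `P` of the corresponding coefficient of `P` times the
coefficient of `t^n` in `(t⁴)^a (t⁶+t⁷)^b`. -/
noncomputable def subst47 (P : MvPowerSeries (Fin 2) ℂ) : PowerSeries ℂ :=
  PowerSeries.mk fun n => ∑ᶠ d : Fin 2 →₀ ℕ,
    MvPowerSeries.coeff d P *
      PowerSeries.coeff n
        (((PowerSeries.X : PowerSeries ℂ) ^ 4) ^ (d 0) *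
          ((PowerSeries.X : PowerSeries ℂ) ^ 6 + (PowerSeries.X : PowerSeries ℂ) ^ 7) ^ (d 1))

/-- `O = ℂ[[t⁴, t⁶+t⁷]]`, the image of the substitution homomorphism. -/
noncomputable def Oimage : Set (PowerSeries ℂ) := Set.range subst47

/-!
Under `x ↦ t⁴`, `y ↦ t⁶(1 + t)` the monomial `x^a y^b` goes to `t^(4a+6b) (1 + t)^b` and
`y² - x³` goes to `2t¹³ + t¹⁴`, so `O` contains elements of every order in
`⟨4, 6⟩ ∪ (13 + ⟨4, 6⟩) = ℕ ∖ {1, 2, 3, 5, 7, 9, 11, 15}`. Conversely the coefficient `cₙ` of `tⁿ`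
in an element of `O` only involves the coefficients of `x^a y^b` with `4a + 6b ≤ n`; reading them
off shows `c₁ = c₂ = c₃ = c₅ = c₉ = 0`, `c₇ = c₆`, `c₁₁ = c₁₀` and `2c₁₅ + c₁₃ = 2c₁₄`, which rules
out the remaining orders `7, 11, 15`.
-/

open PowerSeries

theorem ord_eq_toNat_order (f : PowerSeries ℂ) : ord f = f.order.toNat := by
  by_cases hf : f = 0
  · simp [ord, hf]
  · have hne : {i : ℕ | coeff i f ≠ 0}.Nonempty := ⟨_, coeff_order hf⟩
    have h : f.order = ord f :=
      order_eq_nat.mpr ⟨Nat.sInf_mem hne, fun i hi => by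
        simpa using Nat.notMem_of_lt_sInf hi⟩
    simp [h]

theorem coeff_ord_ne_zero {f : PowerSeries ℂ} (hf : f ≠ 0) : coeff (ord f) f ≠ 0 := by
  rw [ord_eq_toNat_order]
  exact coeff_order hf

theorem coeff_of_lt_ord {f : PowerSeries ℂ} {i : ℕ} (h : i < ord f) : coeff i f = 0 :=
  not_not.mp (Nat.notMem_of_lt_sInf h)

theorem ord_X_pow_mul {g : PowerSeries ℂ} (hg : constantCoeff g ≠ 0) (m : ℕ) :
    ord (X ^ m * g) = m := by
  rw [ord_eq_toNat_order, order_mul, order_X_pow,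
    not_not.mp (mt order_ne_zero_iff_constCoeff_eq_zero.mp hg)]
  simp

theorem coeff_X_pow_mul_one_add_X_pow {R : Type*} [CommSemiring R] (m b n : ℕ) :
    coeff n ((X : R⟦X⟧) ^ m * (1 + X) ^ b) = if m ≤ n then (b.choose (n - m) : R) else 0 := by
  rw [coeff_X_pow_mul', ← Polynomial.coe_X, ← Polynomial.coe_one, ← Polynomial.coe_add,
    ← Polynomial.coe_pow, Polynomial.coeff_coe, Polynomial.coeff_one_add_X_pow]

theorem X_pow_four_pow_mul_X_pow_six_add_X_pow_seven_pow {R : Type*} [CommSemiring R] (a b : ℕ) :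
    ((X : R⟦X⟧) ^ 4) ^ a * (X ^ 6 + X ^ 7) ^ b = X ^ (4 * a + 6 * b) * (1 + X) ^ b := by
  rw [show (X : R⟦X⟧) ^ 6 + X ^ 7 = X ^ 6 * (1 + X) by ring, mul_pow, ← pow_mul, ← pow_mul,
    pow_add, mul_assoc]

theorem coeff_subst47 (P : MvPowerSeries (Fin 2) ℂ) (n : ℕ) :
    coeff n (subst47 P) = ∑ p ∈ Finset.range (n / 4 + 1) ×ˢ Finset.range (n / 6 + 1),
      MvPowerSeries.coeff ((finTwoArrowEquiv' ℕ).symm p) P *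
        if 4 * p.1 + 6 * p.2 ≤ n then (p.2.choose (n - (4 * p.1 + 6 * p.2)) : ℂ) else 0 := by
  rw [subst47, coeff_mk, ← finsum_comp_equiv (finTwoArrowEquiv' ℕ).symm]
  simp only [finTwoArrowEquiv'_symm_apply, X_pow_four_pow_mul_X_pow_six_add_X_pow_seven_pow,
    coeff_X_pow_mul_one_add_X_pow]
  refine finsum_eq_sum_of_support_subset _ fun p hp => ?_
  have : 4 * p.1 + 6 * p.2 ≤ n := by
    by_contra h
    simp [h] at hp
  simp only [Finset.coe_product, Finset.coe_range, Set.mem_prod, Set.mem_Iio]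
  omega

theorem coeff_subst47_eq_zero_of_mem (P : MvPowerSeries (Fin 2) ℂ) {n : ℕ}
    (hn : n ∈ ({1, 2, 3, 5, 9} : Finset ℕ)) : coeff n (subst47 P) = 0 := by
  simp only [Finset.mem_insert, Finset.mem_singleton] at hn
  rcases hn with rfl | rfl | rfl | rfl | rfl <;>
    simp [coeff_subst47, Finset.sum_product, Finset.sum_range_succ, Nat.choose]

theorem coeff_subst47_seven (P : MvPowerSeries (Fin 2) ℂ) :
    coeff 7 (subst47 P) = coeff 6 (subst47 P) := by
  simp [coeff_subst47, Finset.sum_product, Finset.sum_range_succ]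

theorem coeff_subst47_eleven (P : MvPowerSeries (Fin 2) ℂ) :
    coeff 11 (subst47 P) = coeff 10 (subst47 P) := by
  simp [coeff_subst47, Finset.sum_product, Finset.sum_range_succ, Nat.choose]

theorem two_mul_coeff_subst47_fifteen (P : MvPowerSeries (Fin 2) ℂ) :
    2 * coeff 15 (subst47 P) + coeff 13 (subst47 P) = 2 * coeff 14 (subst47 P) := by
  simp [coeff_subst47, Finset.sum_product, Finset.sum_range_succ, Nat.choose, mul_add, mul_comm,
    add_comm]

theorem ord_notMem_of_mem_Oimage {f : PowerSeries ℂ} (hf : f ∈ Oimage) (hf0 : f ≠ 0) :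
    ord f ∉ ({1, 2, 3, 5, 7, 9, 11, 15} : Set ℕ) := by
  obtain ⟨P, rfl⟩ := hf
  have hlead := coeff_ord_ne_zero hf0
  have hlow : ∀ i < ord (subst47 P), coeff i (subst47 P) = 0 := fun i => coeff_of_lt_ord
  intro hgap
  generalize ord (subst47 P) = m at hlead hlow hgap
  simp only [Set.mem_insert_iff, Set.mem_singleton_iff] at hgap
  rcases hgap with rfl | rfl | rfl | rfl | rfl | rfl | rfl | rfl
  · exact hlead (coeff_subst47_eq_zero_of_mem P (by decide))
  · exact hlead (coeff_subst47_eq_zero_of_mem P (by decide))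
  · exact hlead (coeff_subst47_eq_zero_of_mem P (by decide))
  · exact hlead (coeff_subst47_eq_zero_of_mem P (by decide))
  · exact hlead (coeff_subst47_seven P ▸ hlow 6 (by norm_num))
  · exact hlead (coeff_subst47_eq_zero_of_mem P (by decide))
  · exact hlead (coeff_subst47_eleven P ▸ hlow 10 (by norm_num))
  · have h15 := two_mul_coeff_subst47_fifteen P
    rw [hlow 14 (by norm_num), hlow 13 (by norm_num)] at h15
    exact hlead (by simpa using h15)

theorem hasSubst_X_pow_four_X_pow_six_add_X_pow_seven :
    MvPowerSeries.HasSubst (![X ^ 4, X ^ 6 + X ^ 7] : Fin 2 → PowerSeries ℂ) :=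
  MvPowerSeries.hasSubst_of_constantCoeff_zero fun i => by
    fin_cases i <;> simp [← PowerSeries.constantCoeff_eq]

noncomputable def subst47AlgHom : MvPowerSeries (Fin 2) ℂ →ₐ[ℂ] PowerSeries ℂ :=
  MvPowerSeries.substAlgHom hasSubst_X_pow_four_X_pow_six_add_X_pow_seven

theorem coe_subst47AlgHom : ⇑subst47AlgHom = subst47 := by
  ext P n
  rw [subst47AlgHom, MvPowerSeries.coe_substAlgHom, subst47, coeff_mk, PowerSeries.coeff,
    MvPowerSeries.coeff_subst hasSubst_X_pow_four_X_pow_six_add_X_pow_seven]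
  refine finsum_congr fun d => ?_
  simp [Finsupp.prod_fintype, Fin.prod_univ_two, PowerSeries.coeff]

theorem subst47AlgHom_X_zero : subst47AlgHom (MvPowerSeries.X 0) = X ^ 4 :=
  MvPowerSeries.substAlgHom_X _ 0

theorem subst47AlgHom_X_one : subst47AlgHom (MvPowerSeries.X 1) = X ^ 6 + X ^ 7 :=
  MvPowerSeries.substAlgHom_X _ 1

theorem subst47AlgHom_X_pow_mul_X_pow (a b : ℕ) :
    subst47AlgHom (MvPowerSeries.X 0 ^ a * MvPowerSeries.X 1 ^ b) =
      X ^ (4 * a + 6 * b) * (1 + X) ^ b := by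
  rw [map_mul, map_pow, map_pow, subst47AlgHom_X_zero, subst47AlgHom_X_one,
    X_pow_four_pow_mul_X_pow_six_add_X_pow_seven_pow]

theorem subst47AlgHom_X_one_sq_sub_X_zero_pow_three :
    subst47AlgHom (MvPowerSeries.X 1 ^ 2 - MvPowerSeries.X 0 ^ 3) = X ^ 13 * (2 + X) := by
  rw [map_sub, map_pow, map_pow, subst47AlgHom_X_zero, subst47AlgHom_X_one]
  ring

theorem exists_eq_or_eq_add_thirteen {n : ℕ} (hn : n ∉ ({1, 2, 3, 5, 7, 9, 11, 15} : Set ℕ)) :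
    ∃ a b, n = 4 * a + 6 * b ∨ n = 4 * a + 6 * b + 13 := by
  simp only [Set.mem_insert_iff, Set.mem_singleton_iff, not_or] at hn
  have : n % 4 = 0 ∨ n % 4 = 1 ∨ n % 4 = 2 ∨ n % 4 = 3 := by omega
  rcases this with h | h | h | h
  · exact ⟨n / 4, 0, by omega⟩
  · exact ⟨(n - 13) / 4, 0, by omega⟩
  · exact ⟨(n - 6) / 4, 1, by omega⟩
  · exact ⟨(n - 19) / 4, 1, by omega⟩

theorem exists_mem_Oimage_ord_eq {n : ℕ} (hn : n ∉ ({1, 2, 3, 5, 7, 9, 11, 15} : Set ℕ)) :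
    ∃ f ∈ Oimage, f ≠ 0 ∧ ord f = n := by
  have hmem (P) : subst47AlgHom P ∈ Oimage := ⟨P, by rw [coe_subst47AlgHom]⟩
  have hX_pow_mul {m : ℕ} {g : PowerSeries ℂ} (hg : constantCoeff g ≠ 0) : X ^ m * g ≠ 0 :=
    mul_ne_zero (pow_ne_zero _ X_ne_zero) fun h => hg (by rw [h, map_zero])
  obtain ⟨a, b, rfl | rfl⟩ := exists_eq_or_eq_add_thirteen hn
  · have hg : constantCoeff ((1 + X : PowerSeries ℂ) ^ b) ≠ 0 := by simp
    refine ⟨_, hmem (MvPowerSeries.X 0 ^ a * MvPowerSeries.X 1 ^ b), ?_⟩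
    rw [subst47AlgHom_X_pow_mul_X_pow]
    exact ⟨hX_pow_mul hg, ord_X_pow_mul hg _⟩
  · have hg : constantCoeff ((1 + X : PowerSeries ℂ) ^ b * (2 + X)) ≠ 0 := by simp [map_ofNat]
    refine ⟨_, hmem (MvPowerSeries.X 0 ^ a * MvPowerSeries.X 1 ^ b *
      (MvPowerSeries.X 1 ^ 2 - MvPowerSeries.X 0 ^ 3)), ?_⟩
    have : subst47AlgHom (MvPowerSeries.X 0 ^ a * MvPowerSeries.X 1 ^ b *
        (MvPowerSeries.X 1 ^ 2 - MvPowerSeries.X 0 ^ 3)) =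
        X ^ (4 * a + 6 * b + 13) * ((1 + X) ^ b * (2 + X)) := by
      rw [map_mul, subst47AlgHom_X_pow_mul_X_pow, subst47AlgHom_X_one_sq_sub_X_zero_pow_three]
      ring
    rw [this]
    exact ⟨hX_pow_mul hg, ord_X_pow_mul hg _⟩

/-- The set of orders of nonzero elements of `O = ℂ[[t⁴, t⁶+t⁷]]` is
`ℕ ∖ {1,2,3,5,7,9,11,15}`; in particular `13` is the order of an element of `O`
while `15` is not. -/
theorem orders_of_image_subst47 :
    {n : ℕ | ∃ f ∈ Oimage, f ≠ 0 ∧ n = ord f} =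
        ({1, 2, 3, 5, 7, 9, 11, 15} : Set ℕ)ᶜ ∧
      (∃ f ∈ Oimage, f ≠ 0 ∧ ord f = 13) ∧
      ¬ (∃ f ∈ Oimage, f ≠ 0 ∧ ord f = 15) := by
  refine ⟨?_, exists_mem_Oimage_ord_eq (by norm_num), ?_⟩
  · ext n
    constructor
    · rintro ⟨f, hf, hf0, rfl⟩
      exact ord_notMem_of_mem_Oimage hf hf0
    · intro hn
      obtain ⟨f, hf, hf0, rfl⟩ := exists_mem_Oimage_ord_eq hn
      exact ⟨f, hf, hf0, rfl⟩
  · rintro ⟨f, hf, hf0, h15⟩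
    exact ord_notMem_of_mem_Oimage hf hf0 (by simp [h15])
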